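/- arXiv:1905.00124 — 5 statements merged into one kernel-verified Lean document; each statement's English description precedes it below -/
import Mathlib

section
/- Let G be an m×n matrix with entries in {0,1}, and let Q_s ⊆ {0,1}^n be a downward-closed set of binary support vectors (i.e., if s ∈ Q_s and the support of t is contained in the support of s, then t ∈ Q_s; in particular the zero vector is in Q_s). Suppose the F₂-linear encoding map x ↦ G·x (arithmetic modulo 2) is injective on Q_s. Then, viewing the entries of G as the complex scalars 0 and 1, for all complex vectors q₁, q₂ ∈ ℂ^n whose support vectors belong to Q_s, one has q₁ ≠ q₂ if and only if G·q₁ ≠ G·q₂ (with the matrix-vector product taken over ℂ). -/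
noncomputable def liftC (a : ZMod 2) : ℂ := if a = 0 then 0 else 1

noncomputable def suppVec {n : ℕ} (q : Fin n → ℂ) : Fin n → ZMod 2 :=
  fun i => if q i = 0 then 0 else 1

/-!
Let `S` be the union of the supports of `q₁` and `q₂`. Over `𝔽₂` the columns of `G` indexed by
`S` are independent: a kernel vector `w` supported on `S` splits as `w = w₁ - w₂`, where `w₁` is
its restriction to `supp q₁` and `-w₂` its restriction to the complement, which lies in
`supp q₂`. By downward closure `w₁, w₂ ∈ Q_s`, and they have the same syndrome, so `w₁ = w₂`
and `w = 0`.

Independence mod 2 lifts to `ℂ`: if `B G_S = 1` over `𝔽₂` and `B̃` is an integer lift of `B`,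
then `det (B̃ G_S)` is odd, hence nonzero, so `G_S` is injective over `ℂ`. As `q₁ - q₂` is
supported on `S`, `G q₁ = G q₂` forces `q₁ = q₂`.
-/

open Function Matrix

section SupportDownwardClosed

variable {M N R : Type*} [Fintype N] [Ring R]

def SupportDownwardClosed (Q : Set (N → R)) : Prop :=
  ∀ s ∈ Q, ∀ t : N → R, support t ⊆ support s → t ∈ Q

variable {G : Matrix M N R} {Q : Set (N → R)} {s₁ s₂ : N → R}

theorem SupportDownwardClosed.eq_zero_of_mulVec_eq_zero (hQ : SupportDownwardClosed Q)
    (hG : Set.InjOn G.mulVec Q) (h₁ : s₁ ∈ Q) (h₂ : s₂ ∈ Q) {w : N → R}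
    (hw : support w ⊆ support s₁ ∪ support s₂) (hGw : G *ᵥ w = 0) : w = 0 := by
  set w₁ := (support s₁).indicator w
  set w₂ := -(support s₁)ᶜ.indicator w
  have hw₁ : w₁ ∈ Q := hQ s₁ h₁ w₁ <| by
    rw [Set.support_indicator]
    exact Set.inter_subset_left
  have hw₂ : w₂ ∈ Q := hQ s₂ h₂ w₂ <| by
    rw [support_neg, Set.support_indicator]
    exact fun i ⟨hi₁, hi⟩ => (hw hi).resolve_left hi₁
  have hsplit : w = w₁ - w₂ := by
    simp only [w₁, w₂, sub_neg_eq_add, Set.indicator_self_add_compl]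
  have hw₁₂ : w₁ = w₂ := hG hw₁ hw₂ <| by
    rwa [hsplit, mulVec_sub, sub_eq_zero] at hGw
  rw [hsplit, hw₁₂, sub_self]

theorem SupportDownwardClosed.injOn_mulVec (hQ : SupportDownwardClosed Q)
    (hG : Set.InjOn G.mulVec Q) (h₁ : s₁ ∈ Q) (h₂ : s₂ ∈ Q) :
    Set.InjOn G.mulVec {v | support v ⊆ support s₁ ∪ support s₂} := by
  intro u hu v hv huv
  rw [← sub_eq_zero]
  refine hQ.eq_zero_of_mulVec_eq_zero hG h₁ h₂
    ((support_sub u v).trans (Set.union_subset hu hv)) ?_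
  rw [mulVec_sub, huv, sub_self]

end SupportDownwardClosed

section Submatrix

variable {M N R : Type*} [Fintype N] [NonUnitalNonAssocSemiring R]

theorem Matrix.submatrix_mulVec_of_support_subset (A : Matrix M N R) (S : Finset N)
    {v : N → R} (hv : support v ⊆ S) :
    A.submatrix id ((↑) : S → N) *ᵥ (fun i : S => v i) = A *ᵥ v := by
  ext r
  simp only [mulVec, dotProduct, submatrix_apply, id]
  rw [Finset.sum_coe_sort S (fun j => A r j * v j)]
  refine Finset.sum_subset (Finset.subset_univ _) fun j _ hj => ?_
  rw [notMem_support.mp fun h => hj (hv h), mul_zero]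

theorem Matrix.injective_submatrix_mulVec_iff_injOn (A : Matrix M N R) (S : Finset N) :
    Injective (A.submatrix id ((↑) : S → N)).mulVec ↔
      Set.InjOn A.mulVec {v | support v ⊆ S} := by
  constructor
  · intro h u hu v hv huv
    have hres : (fun i : S => u i) = fun i : S => v i := h <| by
      rw [submatrix_mulVec_of_support_subset A S hu, submatrix_mulVec_of_support_subset A S hv,
        huv]
    funext i
    by_cases hi : i ∈ S
    · exact congrFun hres ⟨i, hi⟩
    · rw [notMem_support.mp fun h => hi (hu h), notMem_support.mp fun h => hi (hv h)]
  · intro h x y hxy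
    have hext (z : S → R) : support (extend ((↑) : S → N) z 0) ⊆ S := fun i hi => by
      by_contra hiS
      exact hi (extend_apply' _ _ _ fun ⟨j, hj⟩ => hiS (hj ▸ j.2))
    have hres (z : S → R) : (fun i : S => extend ((↑) : S → N) z 0 i) = z :=
      funext (Subtype.val_injective.extend_apply z 0)
    have := h (hext x) (hext y) <| by
      rw [← submatrix_mulVec_of_support_subset A S (hext x),
        ← submatrix_mulVec_of_support_subset A S (hext y), hres, hres, hxy]
    rw [← hres x, ← hres y, this]

end Submatrix

section IntegerMatrix

variable {M N : Type*} [Fintype M] [Fintype N]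

theorem Matrix.exists_mul_eq_one_of_injective_mulVec [DecidableEq N] {K : Type*} [Field K]
    {A : Matrix M N K} (hA : Injective A.mulVec) : ∃ B : Matrix N M K, B * A = 1 := by
  classical
  obtain ⟨g, hg⟩ := (toLin' A).exists_leftInverse_of_injective (LinearMap.ker_eq_bot.mpr hA)
  refine ⟨LinearMap.toMatrix' g, ?_⟩
  simpa [LinearMap.toMatrix'_comp] using congrArg LinearMap.toMatrix' hg

theorem Matrix.injective_mulVec_map_of_det_mul_ne_zero [DecidableEq N] {R K : Type*}
    [CommRing R] [Field K] (f : R →+* K) (hf : Injective f) (A : Matrix M N R) (B : Matrix N M R)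
    (hBA : (B * A).det ≠ 0) : Injective (A.map f).mulVec := by
  have hBA' : Injective ((B * A).map f).mulVec := by
    rw [mulVec_injective_iff_isUnit, isUnit_iff_isUnit_det, isUnit_iff_ne_zero,
      ← RingHom.mapMatrix_apply, ← RingHom.map_det]
    exact (map_ne_zero_iff f hf).mpr hBA
  intro x y hxy
  apply hBA'
  rw [Matrix.map_mul, ← mulVec_mulVec, ← mulVec_mulVec, hxy]

theorem Matrix.exists_intCast_det_mul_eq_one_of_injective_mulVec_zmod [DecidableEq N] {p : ℕ}
    [Fact p.Prime] (A : Matrix M N ℤ) (hA : Injective (A.map (Int.cast : ℤ → ZMod p)).mulVec) :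
    ∃ B : Matrix N M ℤ, (((B * A).det : ℤ) : ZMod p) = 1 := by
  obtain ⟨B, hB⟩ := exists_mul_eq_one_of_injective_mulVec hA
  refine ⟨B.map fun x => (x.cast : ℤ), ?_⟩
  rw [← eq_intCast (Int.castRingHom (ZMod p)), RingHom.map_det, RingHom.mapMatrix_apply,
    Matrix.map_mul, Matrix.map_map]
  simp [comp_def, hB]

theorem Matrix.injective_mulVec_map_intCast_of_zmod {K : Type*} [Field K] [CharZero K] {p : ℕ}
    [Fact p.Prime] (A : Matrix M N ℤ) (hA : Injective (A.map (Int.cast : ℤ → ZMod p)).mulVec) :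
    Injective (A.map (Int.castRingHom K)).mulVec := by
  classical
  obtain ⟨B, hB⟩ := exists_intCast_det_mul_eq_one_of_injective_mulVec_zmod A hA
  refine injective_mulVec_map_of_det_mul_ne_zero _ Int.cast_injective A B fun h => ?_
  simp [h] at hB

end IntegerMatrix

theorem liftC_eq_intCast_cast (a : ZMod 2) : liftC a = ((a.cast : ℤ) : ℂ) := by
  have h : ∀ b : ZMod 2, (b.cast : ℤ) = if b = 0 then 0 else 1 := by decide
  rw [liftC, h]
  split_ifs <;> simp

theorem support_suppVec {n : ℕ} (q : Fin n → ℂ) : support (suppVec q) = support q := by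
  ext i
  by_cases h : q i = 0 <;> simp [suppVec, h]

theorem stmt0_general {m n : ℕ} (G : Matrix (Fin m) (Fin n) (ZMod 2))
    (Qs : Set (Fin n → ZMod 2))
    (hdown : ∀ s ∈ Qs, ∀ t : Fin n → ZMod 2,
      {i | t i ≠ 0} ⊆ {i | s i ≠ 0} → t ∈ Qs)
    (hinj : ∀ s₁ ∈ Qs, ∀ s₂ ∈ Qs, G.mulVec s₁ = G.mulVec s₂ → s₁ = s₂)
    (q₁ q₂ : Fin n → ℂ) (hq₁ : suppVec q₁ ∈ Qs) (hq₂ : suppVec q₂ ∈ Qs) :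
    q₁ ≠ q₂ ↔ (G.map liftC).mulVec q₁ ≠ (G.map liftC).mulVec q₂ := by
  classical
  refine not_congr ⟨congrArg _, fun h => ?_⟩
  let S : Finset (Fin n) := (support q₁ ∪ support q₂).toFinset
  have hS : (S : Set (Fin n)) = support q₁ ∪ support q₂ := Set.coe_toFinset _
  have hF₂ : Set.InjOn G.mulVec {v | support v ⊆ S} := by
    simpa [hS, support_suppVec] using
      SupportDownwardClosed.injOn_mulVec (G := G) hdown hinj hq₁ hq₂
  let Gℤ : Matrix (Fin m) (Fin n) ℤ := G.map fun a => (a.cast : ℤ)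
  have hGℤ₂ : Gℤ.map (Int.cast : ℤ → ZMod 2) = G := by
    ext
    simp [Gℤ]
  have hGℤℂ : Gℤ.map (Int.castRingHom ℂ) = G.map liftC := by
    ext
    simp [Gℤ, liftC_eq_intCast_cast]
  have hℂ : Set.InjOn (G.map liftC).mulVec {v | support v ⊆ S} := by
    rw [← injective_submatrix_mulVec_iff_injOn, ← hGℤ₂, submatrix_map] at hF₂
    rw [← injective_submatrix_mulVec_iff_injOn, ← hGℤℂ, submatrix_map]
    exact injective_mulVec_map_intCast_of_zmod _ hF₂
  rw [hS] at hℂ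
  exact hℂ Set.subset_union_left Set.subset_union_right h

/-- if the mod-2 encoding `x ↦ G.mulVec x` is injective on a downward-closed
set `Qs` of support vectors (containing the zero vector), then over `ℂ` two channel
vectors whose supports lie in `Qs` are distinct iff their measurements are distinct. -/
theorem stmt0 {m n : ℕ} (G : Matrix (Fin m) (Fin n) (ZMod 2))
    (Qs : Set (Fin n → ZMod 2))
    (hzero : (0 : Fin n → ZMod 2) ∈ Qs)
    (hdown : ∀ s ∈ Qs, ∀ t : Fin n → ZMod 2,
      {i | t i ≠ 0} ⊆ {i | s i ≠ 0} → t ∈ Qs)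
    (hinj : ∀ s₁ ∈ Qs, ∀ s₂ ∈ Qs, G.mulVec s₁ = G.mulVec s₂ → s₁ = s₂)
    (q₁ q₂ : Fin n → ℂ) (hq₁ : suppVec q₁ ∈ Qs) (hq₂ : suppVec q₂ ∈ Qs) :
    q₁ ≠ q₂ ↔ (G.map liftC).mulVec q₁ ≠ (G.map liftC).mulVec q₂ :=
  stmt0_general G Qs hdown hinj q₁ q₂ hq₁ hq₂
end

section
/- Let G be an m×n matrix with entries in {0,1}, and let Q_s ⊆ {0,1}^n be a downward-closed set of binary support vectors containing the zero vector. Suppose the F₂-linear map x ↦ G·x (arithmetic modulo 2) is injective on Q_s. Then for any s₁, s₂ ∈ Q_s, the family of columns of G indexed by the union of the supports of s₁ and s₂ is linearly independent over F₂. -/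
/-- if the mod-2 encoding `x ↦ G.mulVec x` is injective on a downward-closed
set `Qs` of binary support vectors containing the zero vector, then for any `s₁ s₂ ∈ Qs`
the columns of `G` indexed by the union of the supports of `s₁` and `s₂` are linearly
independent over `F₂`. -/
theorem stmt1 {m n : ℕ} (G : Matrix (Fin m) (Fin n) (ZMod 2))
    (Qs : Set (Fin n → ZMod 2))
    (hzero : (0 : Fin n → ZMod 2) ∈ Qs)
    (hdown : ∀ s ∈ Qs, ∀ t : Fin n → ZMod 2,
      {i | t i ≠ 0} ⊆ {i | s i ≠ 0} → t ∈ Qs)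
    (hinj : ∀ s₁ ∈ Qs, ∀ s₂ ∈ Qs, G.mulVec s₁ = G.mulVec s₂ → s₁ = s₂)
    (s₁ s₂ : Fin n → ZMod 2) (hs₁ : s₁ ∈ Qs) (hs₂ : s₂ ∈ Qs) :
    LinearIndependent (ZMod 2)
      (fun j : {j : Fin n // s₁ j ≠ 0 ∨ s₂ j ≠ 0} => (fun i => G i j.val : Fin m → ZMod 2)) := by
  classical
  rw [Fintype.linearIndependent_iff]
  intro g hg
  set t : Fin n → ZMod 2 :=
    fun j => if h : s₁ j ≠ 0 ∨ s₂ j ≠ 0 then g ⟨j, h⟩ else 0 with htdef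
  have ht0 : ∀ j, ¬ (s₁ j ≠ 0 ∨ s₂ j ≠ 0) → t j = 0 := by
    intro j hj; simp [htdef, hj]
  have hGt : G.mulVec t = 0 := by
    funext i
    simp only [Pi.zero_apply]
    have h1 := congrFun hg i
    simp only [Finset.sum_apply, Pi.smul_apply, Pi.zero_apply, smul_eq_mul] at h1
    have h2 : G.mulVec t i = ∑ j : Fin n, G i j * t j := by
      simp [Matrix.mulVec, dotProduct]
    rw [h2, ← h1]
    have h3 : ∑ x : {j : Fin n // s₁ j ≠ 0 ∨ s₂ j ≠ 0}, g x * G i ↑x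
        = ∑ j ∈ Finset.univ.filter (fun j => s₁ j ≠ 0 ∨ s₂ j ≠ 0), G i j * t j := by
      rw [← Finset.sum_subtype_eq_sum_filter]
      refine Finset.sum_congr (by simp) ?_
      intro x _
      simp [htdef, x.prop, mul_comm]
    rw [h3]
    refine (Finset.sum_filter_of_ne ?_).symm
    intro j _ hne
    by_contra hj
    exact hne (by simp [ht0 j hj])
  set t₁ : Fin n → ZMod 2 := fun j => if s₁ j ≠ 0 then t j else 0 with ht₁
  set t₂ : Fin n → ZMod 2 := t - t₁ with ht₂
  have ht₁Q : t₁ ∈ Qs := by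
    refine hdown s₁ hs₁ t₁ ?_
    intro j hj
    simp only [Set.mem_setOf_eq, ht₁] at hj ⊢
    by_contra h
    simp [h] at hj
  have ht₂Q : t₂ ∈ Qs := by
    refine hdown s₂ hs₂ t₂ ?_
    intro j hj
    simp only [Set.mem_setOf_eq, ht₂, Pi.sub_apply, ht₁] at hj ⊢
    by_cases h1 : s₁ j ≠ 0
    · simp [h1] at hj
    · simp only [h1, if_neg, ite_false] at hj
      rw [sub_zero] at hj
      have hp : s₁ j ≠ 0 ∨ s₂ j ≠ 0 := by
        by_contra hp
        exact hj (ht0 j hp)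
      rcases hp with h | h
      · exact absurd h h1
      · exact h
  have heq : G.mulVec t₁ = G.mulVec t₂ := by
    have h3 : G.mulVec t₂ = G.mulVec t - G.mulVec t₁ := by
      rw [ht₂, Matrix.mulVec_sub]
    rw [h3, hGt, zero_sub]
    funext i
    exact (CharTwo.neg_eq _).symm
  have h12 : t₁ = t₂ := hinj t₁ ht₁Q t₂ ht₂Q heq
  have htz : t = 0 := by
    funext j
    simp only [Pi.zero_apply]
    by_cases h1 : s₁ j ≠ 0
    · have e1 : t₁ j = t j := by simp [ht₁, h1]
      have e2 : t₂ j = t j - t j := by simp [ht₂, ht₁, h1]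
      have h4 := congrFun h12 j
      rw [e1, e2, sub_self] at h4
      simpa using h4
    · have e1 : t₁ j = 0 := by simp [ht₁, h1]
      have e2 : t₂ j = t j := by simp [ht₂, ht₁, h1]
      have h4 := congrFun h12 j
      rw [e1, e2] at h4
      simpa using h4.symm
  intro j
  have h5 := congrFun htz j.val
  simpa [htdef, j.prop] using h5
end

section
/- Let v₁, …, v_k be n-dimensional vectors over the two-element field F₂ that are linearly independent over F₂. Then the vectors in ℂ^n obtained by interpreting the components 0_{F₂} and 1_{F₂} of each v_i as the complex scalars 0 and 1 are linearly independent over ℂ. -/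
/-!
The 0/1 lift is the image in `ℂ` of the integer lift `j ↦ (v j).val`, and integer vectors are
linearly independent over a characteristic-zero domain iff they are over `ℤ`. An integer relation
among vectors whose reductions mod `p` are independent has all its coefficients divisible by `p`;
dividing by `p` and repeating, they are divisible by every power of `p`, hence zero.
-/

/-- Lift of a vector over `F₂ = ZMod 2` to a complex vector, sending `0 ↦ 0` and `1 ↦ 1`. -/
noncomputable def liftVecC {n : ℕ} (v : Fin n → ZMod 2) : Fin n → ℂ :=
  fun i => if v i = 0 then 0 else 1

section

variable {ι ι' : Type*} {p : ℕ} {w : ι → ι' → ℤ}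

lemma dvd_coeff_of_linearIndependent_intCast
    (hw : LinearIndependent (ZMod p) fun i => ((↑) : ℤ → ZMod p) ∘ w i)
    {s : Finset ι} {g : ι → ℤ} (hg : ∑ i ∈ s, g i • w i = 0) {i : ι} (hi : i ∈ s) :
    (p : ℤ) ∣ g i := by
  rw [← ZMod.intCast_zmod_eq_zero_iff_dvd]
  refine linearIndependent_iff'.mp hw s (fun i => (g i : ZMod p)) ?_ i hi
  ext j
  simpa using congrArg ((↑) : ℤ → ZMod p) (congrFun hg j)

lemma pow_dvd_coeff_of_linearIndependent_intCast (hp : p ≠ 0)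
    (hw : LinearIndependent (ZMod p) fun i => ((↑) : ℤ → ZMod p) ∘ w i) (s : Finset ι) (m : ℕ) :
    ∀ g : ι → ℤ, ∑ i ∈ s, g i • w i = 0 → ∀ i ∈ s, (p : ℤ) ^ m ∣ g i := by
  induction m with
  | zero => simp
  | succ m ih =>
    intro g hg
    have hdiv := fun i (hi : i ∈ s) => dvd_coeff_of_linearIndependent_intCast hw hg hi
    have hrel : (p : ℤ) • ∑ i ∈ s, (g i / p) • w i = 0 := by
      rw [Finset.smul_sum, ← hg]
      refine Finset.sum_congr rfl fun i hi => ?_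
      rw [smul_smul, Int.mul_ediv_cancel' (hdiv i hi)]
    have hquot := ih _ ((smul_eq_zero.mp hrel).resolve_left (by exact_mod_cast hp))
    intro i hi
    rw [← Int.mul_ediv_cancel' (hdiv i hi), pow_succ']
    exact mul_dvd_mul_left _ (hquot i hi)

theorem LinearIndependent.of_intCast_zmod (hp : 1 < p)
    (hw : LinearIndependent (ZMod p) fun i => ((↑) : ℤ → ZMod p) ∘ w i) :
    LinearIndependent ℤ w := by
  refine linearIndependent_iff'.mpr fun s g hg i hi => ?_
  have hpow := pow_dvd_coeff_of_linearIndependent_intCast (by omega) hw s (g i).natAbs g hg i hi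
  refine Int.eq_zero_of_dvd_of_natAbs_lt_natAbs hpow ?_
  simpa [Int.natAbs_pow] using Nat.lt_pow_self hp

theorem LinearIndependent.zmod_val (hp : 1 < p) {v : ι → ι' → ZMod p}
    (hv : LinearIndependent (ZMod p) v) :
    LinearIndependent ℤ fun i j => ((v i j).val : ℤ) := by
  have : NeZero p := ⟨by omega⟩
  exact .of_intCast_zmod hp (by simpa [Function.comp_def] using hv)

end

lemma liftVecC_eq_algebraMap_comp_val {n : ℕ} (v : Fin n → ZMod 2) :
    liftVecC v = algebraMap ℤ ℂ ∘ fun j => ((v j).val : ℤ) := by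
  ext j
  obtain h | h : v j = 0 ∨ v j = 1 := by generalize v j = x; decide +revert
  all_goals simp [liftVecC, h, -ZMod.natCast_val, ZMod.val_one]

/-- vectors over `F₂` that are linearly independent over `F₂` remain linearly
independent over `ℂ` when their `0`/`1` components are interpreted as complex scalars. -/
theorem stmt2 {n k : ℕ} (v : Fin k → (Fin n → ZMod 2))
    (hindep : LinearIndependent (ZMod 2) v) :
    LinearIndependent ℂ (fun i => liftVecC (v i)) := by
  simp only [liftVecC_eq_algebraMap_comp_val, linearIndependent_algebraMap_comp_iff]
  exact hindep.zmod_val one_lt_two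
end

section
/- Let G_r be an m_r×n_r complex matrix and G_t an m_t×n_t complex matrix, and let L be a natural number. Suppose that for all x₁, x₂ ∈ ℂ^{n_r} each having at most L nonzero components, G_r·x₁ = G_r·x₂ implies x₁ = x₂; and suppose the analogous injectivity property holds for G_t on vectors in ℂ^{n_t} with at most L nonzero components. Then for any two n_r×n_t complex matrices Q₁, Q₂ each having at most L nonzero entries, G_r·Q₁·G_tᵀ = G_r·Q₂·G_tᵀ implies Q₁ = Q₂. In other words, the two-sided measurement map Q ↦ G_r·Q·G_tᵀ is injective on the set of channel matrices with at most L nonzero entries, so the m_r×m_t measurement matrix uniquely determines the sparse channel matrix. -/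
/-!
Cancel `Gr` first: the columns of `Q * Gtᵀ` are the vectors `Q *ᵥ Gt j`, which are supported on
the nonzero rows of `Q` and hence `L`-sparse, so `Q₁ * Gtᵀ = Q₂ * Gtᵀ`. Transposing gives
`Gt * Q₁ᵀ = Gt * Q₂ᵀ`, and the columns of `Qᵀ` are the rows of `Q`, again `L`-sparse, so the
same cancellation with `Gt` yields `Q₁ = Q₂`.
-/

open Matrix Finset

section Sparse

variable {m n k R : Type*} [Fintype n] [DecidableEq R]

theorem Matrix.card_support_mulVec_le [Fintype m] [NonUnitalNonAssocSemiring R]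
    (Q : Matrix m n R) (g : n → R) : #{i | (Q *ᵥ g) i ≠ 0} ≤ #{p : m × n | Q p.1 p.2 ≠ 0} := by
  refine card_le_card_of_surjOn Prod.fst fun i hi => ?_
  simp only [coe_filter, mem_univ, true_and, Set.mem_ofPred_eq] at hi ⊢
  obtain ⟨j, hj⟩ : ∃ j, Q i j ≠ 0 := by
    by_contra! h
    exact hi (by simp [mulVec, dotProduct, h])
  exact ⟨(i, j), hj, rfl⟩

theorem Matrix.card_support_row_le [Fintype m] [Zero R] (Q : Matrix m n R) (i : m) :
    #{j | Q i j ≠ 0} ≤ #{p : m × n | Q p.1 p.2 ≠ 0} :=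
  card_le_card_of_injOn (fun j => (i, j)) (fun j hj => by simpa using hj)
    fun _ _ _ _ h => (Prod.mk.inj h).2

theorem Matrix.eq_of_mul_eq_mul_of_sparse_cols [NonUnitalNonAssocSemiring R]
    {L : ℕ} (A : Matrix m n R)
    (hA : ∀ x₁ x₂ : n → R, #{i | x₁ i ≠ 0} ≤ L → #{i | x₂ i ≠ 0} ≤ L →
      A *ᵥ x₁ = A *ᵥ x₂ → x₁ = x₂)
    {P₁ P₂ : Matrix n k R} (hP₁ : ∀ j, #{i | P₁ i j ≠ 0} ≤ L) (hP₂ : ∀ j, #{i | P₂ i j ≠ 0} ≤ L)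
    (h : A * P₁ = A * P₂) : P₁ = P₂ := by
  ext i j
  exact congrFun (hA _ _ (hP₁ j) (hP₂ j) (funext fun l => congrFun (congrFun h l) j)) i

end Sparse

/-- if `G_r` is injective (as `x ↦ G_r·x`) on complex vectors with at most `L`
nonzero components and likewise `G_t`, then the two-sided measurement map
`Q ↦ G_r·Q·G_tᵀ` is injective on `n_r × n_t` complex channel matrices with at most `L`
nonzero entries. -/
theorem stmt9 {mr nr mt nt : ℕ} (Gr : Matrix (Fin mr) (Fin nr) ℂ)
    (Gt : Matrix (Fin mt) (Fin nt) ℂ) (L : ℕ)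
    (hGr : ∀ x₁ x₂ : Fin nr → ℂ,
      (univ.filter (fun i => x₁ i ≠ 0)).card ≤ L →
      (univ.filter (fun i => x₂ i ≠ 0)).card ≤ L →
      Gr.mulVec x₁ = Gr.mulVec x₂ → x₁ = x₂)
    (hGt : ∀ x₁ x₂ : Fin nt → ℂ,
      (univ.filter (fun i => x₁ i ≠ 0)).card ≤ L →
      (univ.filter (fun i => x₂ i ≠ 0)).card ≤ L →
      Gt.mulVec x₁ = Gt.mulVec x₂ → x₁ = x₂)
    (Q₁ Q₂ : Matrix (Fin nr) (Fin nt) ℂ)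
    (hQ₁ : (univ.filter (fun p : Fin nr × Fin nt => Q₁ p.1 p.2 ≠ 0)).card ≤ L)
    (hQ₂ : (univ.filter (fun p : Fin nr × Fin nt => Q₂ p.1 p.2 ≠ 0)).card ≤ L)
    (hmeas : Gr * Q₁ * Gtᵀ = Gr * Q₂ * Gtᵀ) :
    Q₁ = Q₂ := by
  have hright : Q₁ * Gtᵀ = Q₂ * Gtᵀ :=
    eq_of_mul_eq_mul_of_sparse_cols Gr hGr
      (fun j => (card_support_mulVec_le Q₁ (Gt j)).trans hQ₁)
      (fun j => (card_support_mulVec_le Q₂ (Gt j)).trans hQ₂)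
      (by simpa only [Matrix.mul_assoc] using hmeas)
  have htrans : Q₁ᵀ = Q₂ᵀ :=
    eq_of_mul_eq_mul_of_sparse_cols Gt hGt
      (fun i => (card_support_row_le Q₁ i).trans hQ₁)
      (fun i => (card_support_row_le Q₂ i).trans hQ₂)
      (by simpa only [transpose_mul, transpose_transpose] using congrArg transpose hright)
  exact transpose_injective htrans
end

section
/- Let G be an m×n matrix with entries in {0,1} and let L be a natural number. Suppose the F₂-linear map x ↦ G·x (arithmetic modulo 2) is injective on the set of binary vectors in {0,1}^n of weight at most L. Then, viewing G as a complex matrix (identifying its entries with 0, 1 ∈ ℂ), every family of at most 2L columns of G is linearly independent over ℂ. -/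
/-!
A nonzero complex dependency among at most `2L` columns of the `0/1` matrix can be taken
integral, and after dividing by the gcd of its coefficients some coefficient is odd. Its
reduction mod 2 is then a nonzero vector of weight at most `2L` in the mod-2 kernel of `G`;
splitting its support into two halves of size at most `L` produces two distinct vectors of
weight at most `L` with the same image, contradicting injectivity.
-/

open Finset Matrix

theorem AddMonoidHom.eq_zero_of_injOn_of_hammingNorm_le_two_mul {ι R M : Type*} [Fintype ι]
    [AddGroup R] [DecidableEq R] [AddGroup M] (f : (ι → R) →+ M) {L : ℕ}
    (hf : Set.InjOn f {s | hammingNorm s ≤ L}) {s : ι → R} (hs : hammingNorm s ≤ 2 * L)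
    (hfs : f s = 0) : s = 0 := by
  classical
  obtain ⟨A, hA, hAcard⟩ := exists_subset_card_eq (min_le_left (hammingNorm s) L)
  set s₁ : ι → R := A.piecewise s 0
  have hs₁ : hammingNorm s₁ ≤ L := calc
    hammingNorm s₁ ≤ #A := card_le_card fun i hi => by
      by_contra hiA
      simp [s₁, hiA] at hi
    _ ≤ L := hAcard ▸ min_le_right _ _
  have hs₂ : hammingNorm (s₁ - s) ≤ L := calc
    hammingNorm (s₁ - s) ≤ #((univ.filter fun i => s i ≠ 0) \ A) := card_le_card fun i hi => by
      by_cases hiA : i ∈ A <;> simp_all [s₁]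
    _ ≤ L := by
      rw [card_sdiff_of_subset hA]
      unfold hammingNorm at hs hAcard
      omega
  have hs₁₂ := hf hs₁ hs₂ (by rw [map_sub, hfs, sub_zero])
  exact sub_eq_self.mp hs₁₂.symm

theorem Matrix.eq_zero_of_mulVec_eq_zero_of_map_zmod {m n : Type*} [Fintype n] {p K : ℕ}
    (hp : p ≠ 1) (A : Matrix m n ℤ)
    (hA : ∀ s : n → ZMod p, hammingNorm s ≤ K → A.map Int.cast *ᵥ s = 0 → s = 0)
    {z : n → ℤ} (hz : hammingNorm z ≤ K) (hAz : A *ᵥ z = 0) : z = 0 := by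
  by_contra hz0
  obtain ⟨i₀, hi₀⟩ := Function.ne_iff.mp hz0
  obtain ⟨w, hzw, hw⟩ := extract_gcd z ⟨i₀, mem_univ i₀⟩
  have hd : univ.gcd z ≠ 0 := fun h => hi₀ (gcd_eq_zero_iff.mp h i₀ (mem_univ _))
  have hzw : z = univ.gcd z • w := funext fun i => hzw i (mem_univ i)
  have hAw : A *ᵥ w = 0 := by
    rw [hzw, mulVec_smul] at hAz
    exact (smul_eq_zero.mp hAz).resolve_left hd
  have hw_mod : (fun i => (w i : ZMod p)) = 0 := by
    refine hA _ ((hammingNorm_comp_le_hammingNorm (fun _ => Int.cast) fun _ => Int.cast_zero).trans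
      ((hammingNorm_smul (fun _ => IsSMulRegular.of_ne_zero hd) w).symm.trans_le (hzw ▸ hz))) ?_
    ext i
    simpa [hAw, Function.comp_def] using ((Int.castRingHom (ZMod p)).map_mulVec A w i).symm
  have hp_dvd : (p : ℤ) ∣ univ.gcd w :=
    dvd_gcd fun i _ => (ZMod.intCast_zmod_eq_zero_iff_dvd _ p).mp (congrFun hw_mod i)
  rw [hw] at hp_dvd
  exact hp (by exact_mod_cast Int.eq_one_of_dvd_one (by positivity) hp_dvd)

theorem Matrix.linearIndepOn_col_of_hammingNorm_le {m n R : Type*} [Fintype n]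
    [CommRing R] [DecidableEq R] (A : Matrix m n R) {K : ℕ}
    (hA : ∀ x, hammingNorm x ≤ K → A *ᵥ x = 0 → x = 0) {T : Finset n} (hT : #T ≤ K) :
    LinearIndepOn R A.col (T : Set n) := by
  rw [linearIndepOn_iff]
  intro l hl hl0
  rw [← Finsupp.coe_eq_zero]
  refine hA l ((card_le_card fun i hi => hl (by simpa using hi)).trans hT) ?_
  rw [← hl0]
  ext i
  simp [mulVec, dotProduct, Finsupp.linearCombination_apply, Finsupp.sum_fintype, mul_comm]

/-- if the mod-2 map `x ↦ G.mulVec x` is injective on binary vectors of weight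
at most `L`, then, viewing the `{0,1}` entries of `G` as complex scalars, every family of at
most `2L` columns of `G` is linearly independent over `ℂ`. -/
theorem stmt11 {m n : ℕ} (G : Matrix (Fin m) (Fin n) (ZMod 2)) (L : ℕ)
    (hinj : ∀ s₁ s₂ : Fin n → ZMod 2,
      (univ.filter (fun i => s₁ i ≠ 0)).card ≤ L →
      (univ.filter (fun i => s₂ i ≠ 0)).card ≤ L →
      G.mulVec s₁ = G.mulVec s₂ → s₁ = s₂)
    (T : Finset (Fin n)) (hT : T.card ≤ 2 * L) :
    LinearIndependent ℂ
      (fun j : T => (fun i => if G i j.val = 0 then (0 : ℂ) else 1 : Fin m → ℂ)) := by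
  have hker (s : Fin n → ZMod 2) : hammingNorm s ≤ 2 * L → G *ᵥ s = 0 → s = 0 :=
    G.mulVecLin.toAddMonoidHom.eq_zero_of_injOn_of_hammingNorm_le_two_mul
      (fun s₁ h₁ s₂ h₂ => hinj s₁ s₂ h₁ h₂)
  let A : Matrix (Fin m) (Fin n) ℤ := G.map fun a => if a = 0 then 0 else 1
  have hAG : A.map Int.cast = G := by
    have hcast : ∀ a : ZMod 2, ((if a = 0 then 0 else 1 : ℤ) : ZMod 2) = a := by decide
    ext i j
    exact hcast (G i j)
  have hA : LinearIndepOn ℤ A.col (T : Set (Fin n)) :=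
    A.linearIndepOn_col_of_hammingNorm_le
      (fun z hz hAz => A.eq_zero_of_mulVec_eq_zero_of_map_zmod (by decide) (hAG ▸ hker) hz hAz) hT
  have hcol (j : Fin n) :
      (fun i => if G i j = 0 then (0 : ℂ) else 1) = algebraMap ℤ ℂ ∘ A.col j := by
    ext i
    by_cases h : G i j = 0 <;> simp [A, h]
  rw [funext fun j : T => hcol j]
  exact linearIndependent_algebraMap_comp_iff.mpr hA
end
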